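/- Assume ν > (p−1)/min{d_1(α,β), d_2(α,β), d_3(α,β)}. If x_1, x_2, c_1, c_2 > 0 satisfy the three constraints x_1 + x_2 ≤ c_1 + c_2, f_1(x_1,x_2) ≥ f_1(c_1,c_2), and f_2(x_1,x_2) ≥ f_2(c_1,c_2), then x_1 = c_1 and x_2 = c_2. Moreover, if α = β = p then d_1(α,β) = d_2(α,β) = d_3(α,β) = p, so in that case the hypothesis on ν reduces to ν > (p−1)/p = 2/N. -/

import Mathlib

/-!
Both constraint functions are positively homogeneous of degree `p - 1`, so shrinking `c` by
`t = (x₁ + x₂) / (c₁ + c₂) ≤ 1` to the mass of `x` keeps both constraints. On a segment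
`x₁ + x₂ = const`, `f₁` is strictly decreasing in `x₁` and `f₂` strictly decreasing in `x₂` as soon
as `ν * critConst a b > p - 1` and `ν * critConst b a > p - 1`: the derivative bound is a weighted
AM-GM inequality whose sharp constant is `critConst`, and `d₃ = critConst a b`,
`d₁ ≤ critConst b a`. Hence `x = t • c`, and then `f₁ c ≤ f₁ (t • c) = t ^ (p - 1) * f₁ c`
forces `t = 1`.
-/

noncomputable section

/-- The constant d₁(α,β). -/
def d1 (p a b : ℝ) : ℝ :=
  if a = b then p
  else 2 * p * (1 - a / 2) ^ (a / (2 * p)) * (1 - b / 2) ^ (b / (2 * p))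

/-- The constant d₂(α,β). -/
def d2 (a b : ℝ) : ℝ :=
  b * (1 - b / 2) ^ (1 - a / 2) * (1 - a / 2) ^ (a / 2)
    + (1 / 2) * a * b * (1 - a / 2) ^ (1 - a / 2) * (1 - b / 2) ^ (a / 2 - 1)

/-- The constant d₃(α,β). -/
def d3 (a b : ℝ) : ℝ :=
  a * (1 - a / 2) ^ (1 - b / 2) * (1 - b / 2) ^ (b / 2)
    + (1 / 2) * a * b * (1 - a / 2) ^ (1 - b / 2) * (1 - b / 2) ^ (b / 2 - 1)

/-- `f₁ = constraintFn p a b ν` and `f₂ (x₁, x₂) = constraintFn p b a ν x₂ x₁`. -/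
def constraintFn (p a b ν x y : ℝ) : ℝ :=
  x ^ (p - 1) + ν * a * x ^ (a / 2 - 1) * y ^ (b / 2)

/-- The minimum over `r > 0` of `a * ((1 - a / 2) * r ^ (b / 2) + b / 2 * r ^ (b / 2 - 1))`. -/
def critConst (a b : ℝ) : ℝ :=
  a * ((1 - a / 2) / (1 - b / 2)) ^ (1 - b / 2)

theorem geom_mean_div_le_mul_rpow_add_mul_rpow {w₁ w₂ c₁ c₂ e₁ e₂ r : ℝ} (hw₁ : 0 < w₁)
    (hw₂ : 0 < w₂) (hw : w₁ + w₂ = 1) (hc₁ : 0 ≤ c₁) (hc₂ : 0 ≤ c₂) (hr : 0 < r)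
    (he : w₁ * e₁ + w₂ * e₂ = 0) :
    (c₁ / w₁) ^ w₁ * (c₂ / w₂) ^ w₂ ≤ c₁ * r ^ e₁ + c₂ * r ^ e₂ := by
  have hamgm := Real.geom_mean_le_arith_mean2_weighted hw₁.le hw₂.le
    (by positivity : 0 ≤ c₁ / w₁ * r ^ e₁) (by positivity : 0 ≤ c₂ / w₂ * r ^ e₂) hw
  have hr_cancel : r ^ (e₁ * w₁) * r ^ (e₂ * w₂) = 1 := by
    rw [← Real.rpow_add hr, show e₁ * w₁ + e₂ * w₂ = 0 by linarith, Real.rpow_zero]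
  calc (c₁ / w₁) ^ w₁ * (c₂ / w₂) ^ w₂
      = (c₁ / w₁ * r ^ e₁) ^ w₁ * (c₂ / w₂ * r ^ e₂) ^ w₂ := by
        rw [Real.mul_rpow (by positivity) (by positivity),
          Real.mul_rpow (by positivity) (by positivity), ← Real.rpow_mul hr.le,
          ← Real.rpow_mul hr.le]
        linear_combination -((c₁ / w₁) ^ w₁ * (c₂ / w₂) ^ w₂) * hr_cancel
    _ ≤ w₁ * (c₁ / w₁ * r ^ e₁) + w₂ * (c₂ / w₂ * r ^ e₂) := hamgm
    _ = c₁ * r ^ e₁ + c₂ * r ^ e₂ := by field_simp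

theorem critConst_pos {a b : ℝ} (ha : 0 < a) (ha2 : a < 2) (hb2 : b < 2) : 0 < critConst a b := by
  have : 0 < (1 - a / 2) / (1 - b / 2) := div_pos (by linarith) (by linarith)
  unfold critConst
  positivity

theorem critConst_le {a b r : ℝ} (ha : 0 ≤ a) (ha2 : a ≤ 2) (hb : 0 < b) (hb2 : b < 2)
    (hr : 0 < r) :
    critConst a b ≤ a * ((1 - a / 2) * r ^ (b / 2) + b / 2 * r ^ (b / 2 - 1)) := by
  have hamgm := geom_mean_div_le_mul_rpow_add_mul_rpow (by linarith : 0 < 1 - b / 2)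
    (by linarith : 0 < b / 2) (by ring) (by linarith : 0 ≤ 1 - a / 2) (by linarith : 0 ≤ b / 2)
    hr (by ring : (1 - b / 2) * (b / 2) + b / 2 * (b / 2 - 1) = 0)
  rw [div_self (by linarith), Real.one_rpow, mul_one] at hamgm
  exact mul_le_mul_of_nonneg_left hamgm ha

theorem sub_one_mul_rpow_lt_of_lt_critConst {p a b ν s y : ℝ} (hab : a + b = 2 * p)
    (ha : 0 < a) (ha2 : a < 2) (hb : 0 < b) (hb2 : b < 2) (hν : 0 < ν)
    (hM : p - 1 < ν * critConst a b) (hs : 0 < s) (hy : 0 < y) :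
    (p - 1) * s ^ (p - 2) <
      ν * a * ((1 - a / 2) * s ^ (a / 2 - 2) * y ^ (b / 2) +
        b / 2 * s ^ (a / 2 - 1) * y ^ (b / 2 - 1)) := by
  have hscale : ∀ e, s ^ (p - 2) * (y / s) ^ e = s ^ (p - 2 - e) * y ^ e := fun e => by
    rw [Real.div_rpow hy.le hs.le, Real.rpow_sub hs (p - 2) e]
    ring
  have hsp : 0 < s ^ (p - 2) := by positivity
  calc (p - 1) * s ^ (p - 2) < ν * critConst a b * s ^ (p - 2) := by gcongr
    _ ≤ ν * (a * ((1 - a / 2) * (y / s) ^ (b / 2) + b / 2 * (y / s) ^ (b / 2 - 1))) *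
          s ^ (p - 2) := by
        gcongr
        exact critConst_le ha.le ha2.le hb hb2 (div_pos hy hs)
    _ = ν * a * ((1 - a / 2) * s ^ (a / 2 - 2) * y ^ (b / 2) +
          b / 2 * s ^ (a / 2 - 1) * y ^ (b / 2 - 1)) := by
        rw [show a / 2 - 2 = p - 2 - b / 2 by linarith,
          show a / 2 - 1 = p - 2 - (b / 2 - 1) by linarith]
        linear_combination
          ν * a * (1 - a / 2) * hscale (b / 2) + ν * a * (b / 2) * hscale (b / 2 - 1)

theorem hasDerivAt_constraintFn_segment {p a b ν s S : ℝ} (hs : 0 < s) (hsS : s < S) :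
    HasDerivAt (fun s => constraintFn p a b ν s (S - s))
      ((p - 1) * s ^ (p - 2) - ν * a * ((1 - a / 2) * s ^ (a / 2 - 2) * (S - s) ^ (b / 2) +
        b / 2 * s ^ (a / 2 - 1) * (S - s) ^ (b / 2 - 1))) s := by
  have hy : S - s ≠ 0 := by linarith
  have hpow : ∀ e, HasDerivAt (fun s : ℝ => s ^ e) (e * s ^ (e - 1)) s := fun e =>
    Real.hasDerivAt_rpow_const (Or.inl hs.ne')
  have hpow' : HasDerivAt (fun s : ℝ => (S - s) ^ (b / 2)) (b / 2 * (S - s) ^ (b / 2 - 1) * -1) s :=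
    (Real.hasDerivAt_rpow_const (Or.inl hy)).comp s ((hasDerivAt_id s).const_sub S)
  refine ((hpow (p - 1)).add (((hpow (a / 2 - 1)).const_mul (ν * a)).mul hpow')).congr_deriv ?_
  rw [show p - 1 - 1 = p - 2 by ring, show a / 2 - 1 - 1 = a / 2 - 2 by ring]
  ring

theorem strictAntiOn_constraintFn_segment {p a b ν S : ℝ} (hab : a + b = 2 * p)
    (ha : 0 < a) (ha2 : a < 2) (hb : 0 < b) (hb2 : b < 2) (hν : 0 < ν)
    (hM : p - 1 < ν * critConst a b) :
    StrictAntiOn (fun s => constraintFn p a b ν s (S - s)) (Set.Ioo 0 S) := by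
  refine strictAntiOn_of_deriv_neg (convex_Ioo 0 S)
    (fun s hs => (hasDerivAt_constraintFn_segment hs.1 hs.2).continuousAt.continuousWithinAt)
    (fun s hs => ?_)
  rw [interior_Ioo] at hs
  rw [(hasDerivAt_constraintFn_segment hs.1 hs.2).deriv, sub_neg]
  exact sub_one_mul_rpow_lt_of_lt_critConst hab ha ha2 hb hb2 hν hM hs.1 (by linarith [hs.2])

theorem constraintFn_mul_mul {p a b ν t x y : ℝ} (hab : a + b = 2 * p) (ht : 0 < t)
    (hx : 0 ≤ x) (hy : 0 ≤ y) :
    constraintFn p a b ν (t * x) (t * y) = t ^ (p - 1) * constraintFn p a b ν x y := by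
  have ht_pow : t ^ (a / 2 - 1) * t ^ (b / 2) = t ^ (p - 1) := by
    rw [← Real.rpow_add ht]
    congr 1
    linarith
  unfold constraintFn
  rw [Real.mul_rpow ht.le hx, Real.mul_rpow ht.le hx, Real.mul_rpow ht.le hy]
  linear_combination ν * a * x ^ (a / 2 - 1) * y ^ (b / 2) * ht_pow

theorem constraintFn_pos {p a b ν x y : ℝ} (ha : 0 < a) (hν : 0 < ν) (hx : 0 < x) (hy : 0 < y) :
    0 < constraintFn p a b ν x y := by
  unfold constraintFn
  positivity

theorem le_mul_of_constraintFn_le {p a b ν t x₁ x₂ c₁ c₂ : ℝ} (hab : a + b = 2 * p)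
    (ha : 0 < a) (ha2 : a < 2) (hb : 0 < b) (hb2 : b < 2) (hp : 1 ≤ p) (hν : 0 < ν)
    (hM : p - 1 < ν * critConst a b) (hx₁ : 0 < x₁) (hx₂ : 0 < x₂) (hc₁ : 0 < c₁)
    (hc₂ : 0 < c₂) (ht : 0 < t) (ht1 : t ≤ 1) (hsum : x₁ + x₂ = t * (c₁ + c₂))
    (hf : constraintFn p a b ν c₁ c₂ ≤ constraintFn p a b ν x₁ x₂) : x₁ ≤ t * c₁ := by
  have hscaled : constraintFn p a b ν (t * c₁) (t * c₂) ≤ constraintFn p a b ν x₁ x₂ := by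
    rw [constraintFn_mul_mul hab ht hc₁.le hc₂.le]
    refine le_trans (mul_le_of_le_one_left (constraintFn_pos ha hν hc₁ hc₂).le ?_) hf
    exact Real.rpow_le_one ht.le ht1 (by linarith)
  have hanti := strictAntiOn_constraintFn_segment (S := x₁ + x₂) hab ha ha2 hb hb2 hν hM
  have hrest : x₁ + x₂ - t * c₁ = t * c₂ := by linarith
  refine (hanti.le_iff_ge ⟨by positivity, by nlinarith⟩ ⟨hx₁, by linarith⟩).1 ?_
  simpa only [hrest, add_sub_cancel_left] using hscaled

theorem eq_of_constraintFn_le {p a b ν x₁ x₂ c₁ c₂ : ℝ} (hab : a + b = 2 * p)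
    (ha : 0 < a) (ha2 : a < 2) (hb : 0 < b) (hb2 : b < 2) (hp : 1 < p) (hν : 0 < ν)
    (hMa : p - 1 < ν * critConst a b) (hMb : p - 1 < ν * critConst b a)
    (hx₁ : 0 < x₁) (hx₂ : 0 < x₂) (hc₁ : 0 < c₁) (hc₂ : 0 < c₂) (hsum : x₁ + x₂ ≤ c₁ + c₂)
    (hf₁ : constraintFn p a b ν c₁ c₂ ≤ constraintFn p a b ν x₁ x₂)
    (hf₂ : constraintFn p b a ν c₂ c₁ ≤ constraintFn p b a ν x₂ x₁) :
    x₁ = c₁ ∧ x₂ = c₂ := by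
  set t := (x₁ + x₂) / (c₁ + c₂)
  have ht : 0 < t := by positivity
  have ht1 : t ≤ 1 := (div_le_one (by positivity)).2 hsum
  have hmass : x₁ + x₂ = t * (c₁ + c₂) := (div_mul_cancel₀ _ (by positivity)).symm
  have h₁ : x₁ ≤ t * c₁ :=
    le_mul_of_constraintFn_le hab ha ha2 hb hb2 hp.le hν hMa hx₁ hx₂ hc₁ hc₂ ht ht1 hmass hf₁
  have h₂ : x₂ ≤ t * c₂ :=
    le_mul_of_constraintFn_le (by linarith) hb hb2 ha ha2 hp.le hν hMb hx₂ hx₁ hc₂ hc₁ ht ht1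
      (by linarith) hf₂
  have hx₁_eq : x₁ = t * c₁ := by linarith
  have hx₂_eq : x₂ = t * c₂ := by linarith
  have ht_eq : t = 1 := by
    refine le_antisymm ht1 (not_lt.1 fun ht_lt => ?_)
    have hpow : t ^ (p - 1) < 1 := Real.rpow_lt_one ht.le ht_lt (by linarith)
    have hc := constraintFn_pos (p := p) (b := b) ha hν hc₁ hc₂
    rw [hx₁_eq, hx₂_eq, constraintFn_mul_mul hab ht hc₁.le hc₂.le] at hf₁
    nlinarith
  rw [hx₁_eq, hx₂_eq, ht_eq, one_mul, one_mul]
  exact ⟨rfl, rfl⟩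

theorem d3_eq_critConst {a b : ℝ} (ha2 : a < 2) (hb2 : b < 2) : d3 a b = critConst a b := by
  have hA : 0 ≤ 1 - a / 2 := by linarith
  have hB : 0 < 1 - b / 2 := by linarith
  have hB_pow : (1 - b / 2) ^ (b / 2) = (1 - b / 2) ^ (b / 2 - 1) * (1 - b / 2) := by
    rw [← Real.rpow_add_one hB.ne', sub_add_cancel]
  unfold d3 critConst
  rw [Real.div_rpow hA hB.le, hB_pow, show b / 2 - 1 = -(1 - b / 2) by ring,
    Real.rpow_neg hB.le]
  field_simp
  ring

theorem critConst_self {a : ℝ} (ha2 : a < 2) : critConst a a = a := by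
  rw [critConst, div_self (by linarith), Real.one_rpow, mul_one]

theorem two_mul_mul_rpow_mul_rpow_le_critConst {p a b : ℝ} (hab : a + b = 2 * p) (hp : 1 < p)
    (ha : 0 < a) (ha2 : a < 2) (hb2 : b < 2) :
    2 * p * (1 - a / 2) ^ (a / (2 * p)) * (1 - b / 2) ^ (b / (2 * p)) ≤ critConst b a := by
  obtain rfl : b = 2 * p - a := by linarith
  have hA : 0 < 1 - a / 2 := by linarith
  have hB : 0 < 1 - (2 * p - a) / 2 := by linarith
  have hp0 : 0 < p := by linarith
  set wA := a / (2 * p) + (1 - a / 2) with hwA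
  set wB := a * (p - 1) / (2 * p) with hwB
  have hexpA : a / (2 * p) = wA - (1 - a / 2) := by ring
  have hexpB : (2 * p - a) / (2 * p) = wB + (1 - a / 2) := by
    rw [hwB]
    field_simp
    ring
  have hamgm := Real.geom_mean_le_arith_mean2_weighted (w₁ := wA) (w₂ := wB)
    (by positivity) (by have := sub_pos.2 hp; positivity) hA.le hB.le
    (by rw [hwA, hwB]; field_simp; ring)
  have hmean : 2 * p * (wA * (1 - a / 2) + wB * (1 - (2 * p - a) / 2))
      = 2 * p - a - a * (p - 1) * (1 + p - a) := by
    rw [hwA, hwB]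
    field_simp
    ring
  have hloss : 0 ≤ a * (p - 1) * (1 + p - a) := by
    have := sub_pos.2 hp
    have : 0 < 1 + p - a := by linarith
    positivity
  calc 2 * p * (1 - a / 2) ^ (a / (2 * p)) * (1 - (2 * p - a) / 2) ^ ((2 * p - a) / (2 * p))
      = 2 * p * ((1 - a / 2) ^ wA * (1 - (2 * p - a) / 2) ^ wB) *
          ((1 - (2 * p - a) / 2) ^ (1 - a / 2) / (1 - a / 2) ^ (1 - a / 2)) := by
        rw [hexpA, hexpB, Real.rpow_sub hA, Real.rpow_add hB]
        ring
    _ ≤ 2 * p * (wA * (1 - a / 2) + wB * (1 - (2 * p - a) / 2)) *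
          ((1 - (2 * p - a) / 2) ^ (1 - a / 2) / (1 - a / 2) ^ (1 - a / 2)) := by
        gcongr
    _ ≤ (2 * p - a) * ((1 - (2 * p - a) / 2) ^ (1 - a / 2) / (1 - a / 2) ^ (1 - a / 2)) := by
        gcongr
        linarith
    _ = critConst (2 * p - a) a := by
        rw [critConst, Real.div_rpow hB.le hA.le]

theorem d1_le_critConst {p a b : ℝ} (hab : a + b = 2 * p) (hp : 1 < p) (ha : 0 < a)
    (ha2 : a < 2) (hb2 : b < 2) : d1 p a b ≤ critConst b a := by
  unfold d1
  split_ifs with h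
  · subst h
    rw [critConst_self ha2]
    linarith
  · exact two_mul_mul_rpow_mul_rpow_le_critConst hab hp ha ha2 hb2

theorem d1_pos {p a b : ℝ} (hp : 0 < p) (ha2 : a < 2) (hb2 : b < 2) : 0 < d1 p a b := by
  have hA : 0 < 1 - a / 2 := by linarith
  have hB : 0 < 1 - b / 2 := by linarith
  unfold d1
  split_ifs <;> positivity

theorem d2_pos {a b : ℝ} (ha : 0 < a) (hb : 0 < b) (ha2 : a < 2) (hb2 : b < 2) : 0 < d2 a b := by
  have hA : 0 < 1 - a / 2 := by linarith
  have hB : 0 < 1 - b / 2 := by linarith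
  unfold d2
  positivity

theorem d2_self {a : ℝ} (ha2 : a < 2) : d2 a a = a := by
  have hA : 0 < 1 - a / 2 := by linarith
  have h₁ : (1 - a / 2) ^ (1 - a / 2) * (1 - a / 2) ^ (a / 2) = 1 - a / 2 := by
    rw [← Real.rpow_add hA, sub_add_cancel, Real.rpow_one]
  have h₂ : (1 - a / 2) ^ (1 - a / 2) * (1 - a / 2) ^ (a / 2 - 1) = 1 := by
    rw [← Real.rpow_add hA, show 1 - a / 2 + (a / 2 - 1) = 0 by ring, Real.rpow_zero]
  unfold d2
  linear_combination a * h₁ + a * a / 2 * h₂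

/-- the nonlinear constraint problem for the two-component system:
for ν > (p−1)/min{d₁,d₂,d₃}, the constraints force (x₁,x₂) = (c₁,c₂); moreover
when α = β = p all three constants equal p, and (p−1)/p = 2/N. -/
theorem stmt15 (N : ℕ) (hN : 5 ≤ N) (p : ℝ) (hp : p = (N : ℝ) / ((N : ℝ) - 2))
    (a b : ℝ) (ha : 0 < a) (ha2 : a < 2) (hb : 0 < b) (hb2 : b < 2)
    (hab : a + b = 2 * p)
    (ν : ℝ) (hν0 : 0 < ν)
    (hν : ν > (p - 1) / min (min (d1 p a b) (d2 a b)) (d3 a b))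
    (x₁ x₂ c₁ c₂ : ℝ) (hx₁ : 0 < x₁) (hx₂ : 0 < x₂) (hc₁ : 0 < c₁) (hc₂ : 0 < c₂)
    (hsum : x₁ + x₂ ≤ c₁ + c₂)
    (hf1 : c₁ ^ (p - 1) + ν * a * c₁ ^ (a / 2 - 1) * c₂ ^ (b / 2) ≤
           x₁ ^ (p - 1) + ν * a * x₁ ^ (a / 2 - 1) * x₂ ^ (b / 2))
    (hf2 : c₂ ^ (p - 1) + ν * b * c₁ ^ (a / 2) * c₂ ^ (b / 2 - 1) ≤
           x₂ ^ (p - 1) + ν * b * x₁ ^ (a / 2) * x₂ ^ (b / 2 - 1)) :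
    (x₁ = c₁ ∧ x₂ = c₂) ∧
    (a = b → d1 p a b = p ∧ d2 a b = p ∧ d3 a b = p ∧ (p - 1) / p = 2 / (N : ℝ)) := by
  have hN' : (5 : ℝ) ≤ N := by exact_mod_cast hN
  have hp1 : 1 < p := by rw [hp, lt_div_iff₀ (by linarith)]; linarith
  have hd3 := d3_eq_critConst ha2 hb2
  set m := min (min (d1 p a b) (d2 a b)) (d3 a b)
  have hm : 0 < m := lt_min (lt_min (d1_pos (by linarith) ha2 hb2) (d2_pos ha hb ha2 hb2))
    (hd3 ▸ critConst_pos ha ha2 hb2)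
  have hνm : p - 1 < ν * m := (div_lt_iff₀ hm).1 hν
  have hMa : p - 1 < ν * critConst a b :=
    hνm.trans_le (by gcongr; exact hd3 ▸ min_le_right _ _)
  have hMb : p - 1 < ν * critConst b a := hνm.trans_le <| by
    gcongr
    exact ((min_le_left _ _).trans (min_le_left _ _)).trans (d1_le_critConst hab hp1 ha ha2 hb2)
  have hf2' : constraintFn p b a ν c₂ c₁ ≤ constraintFn p b a ν x₂ x₁ := by
    unfold constraintFn
    linarith
  refine ⟨eq_of_constraintFn_le hab ha ha2 hb hb2 hp1 hν0 hMa hMb hx₁ hx₂ hc₁ hc₂ hsum hf1 hf2',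
    fun hab' => ?_⟩
  subst hab'
  have hap : a = p := by linarith
  have hN2 : (N : ℝ) - 2 ≠ 0 := by linarith
  refine ⟨if_pos rfl, (d2_self ha2).trans hap, hd3.trans ((critConst_self ha2).trans hap), ?_⟩
  rw [hp]
  field_simp
  ring
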